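/- arXiv:1109.5740 — 5 statements merged into one kernel-verified Lean document; each statement's English description precedes it below -/
import Mathlib

section
/- Let g_0, …, g_{m-1} : ℍ → ℂ be holomorphic functions satisfying g_j(τ+1) = λ(g_j(τ) + g_{j-1}(τ)) for 0 ≤ j ≤ m-1 (with g_{-1} = 0), where λ = e^{2πiμ} is nonzero. Define h_j(τ) = ∑_{t=0}^{j} (-1)^t C(τ+t-1, t) g_{j-t}(τ). Then h_j(τ+1) = λ h_j(τ) for each 0 ≤ j ≤ m-1. -/
/-!
Fix `τ` and put `a k = g k τ`. The hypothesis says `k ↦ g k (τ + 1)` is `λ (a + N a)`, where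
`N` shifts a sequence one step to the right. The transform
`H_j(a, x) = ∑ₜ (-1)ᵗ C(x + t - 1, t) a_{j-t}` is linear in `a` and satisfies
`H_j(N a, x) = H_{j-1}(a, x)`, so it suffices that `H_j(a, x + 1) + H_{j-1}(a, x + 1) = H_j(a, x)`.
After splitting off the `t = 0` terms this is Pascal's rule `C(y + 1, t + 1) = C(y, t) + C(y, t + 1)`
term by term, with `y = x + t`.
-/

open Complex

/-- Generalized binomial coefficient `C(x,t) = x(x-1)⋯(x-t+1)/t!`. -/
noncomputable def cbinom (x : ℂ) (t : ℕ) : ℂ :=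
  (∏ i ∈ Finset.range t, (x - i)) / (Nat.factorial t)

theorem cbinom_eq_choose (x : ℂ) (t : ℕ) : cbinom x t = Ring.choose x t := by
  rw [Ring.choose_eq_smul, cbinom, ← descPochhammer_eval_eq_prod_range, smul_eq_mul,
    div_eq_inv_mul, ← Polynomial.aeval_eq_smeval, Polynomial.aeval_def, ← Polynomial.eval_map,
    descPochhammer_map]

open Finset

section BinomTransform

variable {R : Type*} [CommRing R] [BinomialRing R]

def seqShift (a : ℕ → R) (k : ℕ) : R := if k = 0 then 0 else a (k - 1)

def binomTransform (a : ℕ → R) (x : R) (j : ℕ) : R :=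
  ∑ t ∈ range (j + 1), (-1) ^ t * Ring.choose (x + t - 1) t * a (j - t)

theorem binomTransform_const_mul (c : R) (a : ℕ → R) (x : R) (j : ℕ) :
    binomTransform (fun k => c * a k) x j = c * binomTransform a x j := by
  simp only [binomTransform, mul_sum]
  exact sum_congr rfl fun t _ => by ring

theorem binomTransform_add (a b : ℕ → R) (x : R) (j : ℕ) :
    binomTransform (a + b) x j = binomTransform a x j + binomTransform b x j := by
  simp only [binomTransform, ← sum_add_distrib, Pi.add_apply, mul_add]

theorem binomTransform_seqShift_zero (a : ℕ → R) (x : R) :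
    binomTransform (seqShift a) x 0 = 0 := by
  simp [binomTransform, seqShift]

theorem binomTransform_seqShift_succ (a : ℕ → R) (x : R) (j : ℕ) :
    binomTransform (seqShift a) x (j + 1) = binomTransform a x j := by
  rw [binomTransform, sum_range_succ]
  simp only [seqShift, Nat.sub_self, if_true, mul_zero, add_zero]
  refine sum_congr rfl fun t ht => ?_
  rw [if_neg (by have := mem_range.mp ht; omega), show j + 1 - t - 1 = j - t by omega]

theorem binomTransform_pascal (a : ℕ → R) (x : R) (j : ℕ) :
    binomTransform a (x + 1) (j + 1) + binomTransform a (x + 1) j =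
      binomTransform a x (j + 1) := by
  have pascal (t : ℕ) : (-1) ^ (t + 1) * Ring.choose (x + 1 + (t + 1 : ℕ) - 1) (t + 1)
      + (-1) ^ t * Ring.choose (x + 1 + t - 1) t
      = (-1) ^ (t + 1) * Ring.choose (x + (t + 1 : ℕ) - 1) (t + 1) := by
    rw [show x + 1 + ((t + 1 : ℕ) : R) - 1 = x + t + 1 by push_cast; ring,
      show x + ((t + 1 : ℕ) : R) - 1 = x + t by push_cast; ring,
      show x + 1 + (t : R) - 1 = x + t by ring, Ring.choose_succ_succ]
    ring
  rw [binomTransform, binomTransform, binomTransform, sum_range_succ' _ (j + 1),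
    sum_range_succ' _ (j + 1)]
  simp only [Ring.choose_zero_right, Nat.sub_zero, Nat.add_sub_add_right, ← pascal, add_mul,
    sum_add_distrib]
  ring

theorem binomTransform_add_seqShift (a : ℕ → R) (x : R) (j : ℕ) :
    binomTransform (a + seqShift a) (x + 1) j = binomTransform a x j := by
  rw [binomTransform_add]
  cases j with
  | zero => rw [binomTransform_seqShift_zero, add_zero]; simp [binomTransform]
  | succ j => rw [binomTransform_seqShift_succ, binomTransform_pascal]

end BinomTransform

theorem hfun_translation_general (m : ℕ) (μ : ℂ) (g : ℕ → ℂ → ℂ)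
    (hrec : ∀ j < m, ∀ τ : ℂ, 0 < τ.im →
      g j (τ + 1) = Complex.exp (2 * Real.pi * I * μ) *
        (g j τ + if j = 0 then 0 else g (j - 1) τ)) :
    ∀ j < m, ∀ τ : ℂ, 0 < τ.im →
      (∑ t ∈ Finset.range (j + 1), (-1 : ℂ) ^ t * cbinom ((τ + 1) + t - 1) t * g (j - t) (τ + 1))
        = Complex.exp (2 * Real.pi * I * μ) *
          ∑ t ∈ Finset.range (j + 1), (-1 : ℂ) ^ t * cbinom (τ + t - 1) t * g (j - t) τ := by
  intro j hj τ hτ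
  set lam := Complex.exp (2 * Real.pi * I * μ)
  set a : ℕ → ℂ := fun k => g k τ
  have hstep (t : ℕ) : g (j - t) (τ + 1) = lam * (a + seqShift a) (j - t) :=
    hrec (j - t) (by omega) τ hτ
  simp only [cbinom_eq_choose]
  calc _ = binomTransform (fun k => lam * (a + seqShift a) k) (τ + 1) j := by
        simp only [binomTransform, hstep]
    _ = lam * binomTransform a τ j := by
        rw [binomTransform_const_mul, binomTransform_add_seqShift]

/-- If `g_0,…,g_{m-1}` are holomorphic on the upper half-plane and satisfy
`g_j(τ+1) = λ(g_j(τ) + g_{j-1}(τ))` (with `g_{-1} = 0`), where `λ = e^{2πiμ}`,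
then `h_j(τ) = ∑_{t=0}^{j} (-1)^t C(τ+t-1,t) g_{j-t}(τ)` satisfies
`h_j(τ+1) = λ h_j(τ)`. -/
theorem hfun_translation (m : ℕ) (μ : ℂ) (g : ℕ → ℂ → ℂ)
    (hol : ∀ j < m, DifferentiableOn ℂ (g j) {τ : ℂ | 0 < τ.im})
    (hrec : ∀ j < m, ∀ τ : ℂ, 0 < τ.im →
      g j (τ + 1) = Complex.exp (2 * Real.pi * I * μ) *
        (g j τ + if j = 0 then 0 else g (j - 1) τ)) :
    ∀ j < m, ∀ τ : ℂ, 0 < τ.im →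
      (∑ t ∈ Finset.range (j + 1), (-1 : ℂ) ^ t * cbinom ((τ + 1) + t - 1) t * g (j - t) (τ + 1))
        = Complex.exp (2 * Real.pi * I * μ) *
          ∑ t ∈ Finset.range (j + 1), (-1 : ℂ) ^ t * cbinom (τ + t - 1) t * g (j - t) τ :=
  hfun_translation_general m μ g hrec
end

section
/- Let γ = [[a,b],[c,d]] ∈ SL(2,ℤ) with c > 0 have Eichler canonical representation γ = (S T^{l_{ν+1}})⋯(S T^{l_0}) with l_{ν+1} ≠ 0 and l_0 < 0. Then |l_0 l_1 ⋯ l_{ν+1}| ≤ |d|. -/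
/-!
Multiplying `P ∈ SL(2, ℤ)` on the left by `S T^l = !![0, -1; 1, l]` sends its second column
`(b, d)` to `(-d, b + l d)`. If `l` has the sign of `b d` (or `b = 0`), there is no cancellation
in `b + l d`, so `|d|` gets multiplied by at least `|l|`, and the new column `(-d, b + l d)` has the
opposite sign pattern. Since the exponents of a canonical representation with `l₀ < 0` strictly
alternate in sign, starting from the identity the bottom-right entry grows by a factor of at
least `|lⱼ|` at each step.
-/

open ModularGroup

/-- The product `(S T^{l_{ν+1}}) ⋯ (S T^{l_1}) (S T^{l_0})` where
`L = [l_0, l_1, …, l_{ν+1}]`. -/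
def eichlerWord (L : List ℤ) : Matrix.SpecialLinearGroup (Fin 2) ℤ :=
  ((L.map fun l => ModularGroup.S * ModularGroup.T ^ l).reverse).prod

@[simp]
lemma eichlerWord_nil : eichlerWord [] = 1 := rfl

lemma eichlerWord_cons (l : ℤ) (M : List ℤ) :
    eichlerWord (l :: M) = eichlerWord M * (S * T ^ l) := by
  simp [eichlerWord]

lemma coe_S_mul_T_zpow (l : ℤ) : ((S * T ^ l : Matrix.SpecialLinearGroup (Fin 2) ℤ) :
    Matrix (Fin 2) (Fin 2) ℤ) = !![0, -1; 1, l] := by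
  ext i j
  fin_cases i <;> fin_cases j <;> simp [coe_S, coe_T_zpow, Matrix.mul_apply, Fin.sum_univ_two]

lemma S_mul_T_zpow_mul_apply_zero_one (l : ℤ) (P : Matrix.SpecialLinearGroup (Fin 2) ℤ) :
    (S * T ^ l * P) 0 1 = -P 1 1 := by
  simp [Matrix.SpecialLinearGroup.coe_mul, coe_S_mul_T_zpow l, Matrix.mul_apply, Fin.sum_univ_two]

lemma S_mul_T_zpow_mul_apply_one_one (l : ℤ) (P : Matrix.SpecialLinearGroup (Fin 2) ℤ) :
    (S * T ^ l * P) 1 1 = P 0 1 + l * P 1 1 := by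
  simp [Matrix.SpecialLinearGroup.coe_mul, coe_S_mul_T_zpow l, Matrix.mul_apply, Fin.sum_univ_two]

def AlternatesInSign (s : ℤ) (M : List ℤ) : Prop :=
  ∀ i < M.length, 0 < s * (-1) ^ i * M.getD i 0

lemma alternatesInSign_cons {s l : ℤ} {M : List ℤ} :
    AlternatesInSign s (l :: M) ↔ 0 < s * l ∧ AlternatesInSign (-s) M := by
  constructor
  · intro h
    refine ⟨by simpa using h 0 (by simp), fun i hi => ?_⟩
    simpa [pow_succ, mul_comm, mul_left_comm] using h (i + 1) (by simpa using hi)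
  · rintro ⟨hl, hM⟩ (_ | i) hi
    · simpa using hl
    · simpa [pow_succ, mul_comm, mul_left_comm] using hM i (by simpa using hi)

lemma abs_mul_le_abs_add_of_sign {s b d l : ℤ} (hl : 0 < s * l) (hbd : 0 ≤ s * b * d) :
    |l| * |d| ≤ |b + l * d| := by
  have hs : s ≠ 0 := by rintro rfl; simp at hl
  have hbld : 0 ≤ b * (l * d) := by
    have : 0 ≤ s ^ 2 * (b * (l * d)) := by nlinarith [mul_nonneg hbd hl.le]
    exact (mul_nonneg_iff_of_pos_left (by positivity)).mp this
  rw [← abs_mul]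
  rcases abs_cases (l * d) with ⟨h1, _⟩ | ⟨h1, _⟩ <;>
    rcases abs_cases (b + l * d) with ⟨h2, _⟩ | ⟨h2, _⟩ <;> nlinarith

theorem abs_prod_mul_le_abs_eichlerWord_mul_apply_one_one (M : List ℤ) :
    ∀ (s : ℤ) (P : Matrix.SpecialLinearGroup (Fin 2) ℤ), AlternatesInSign s M →
      P 1 1 ≠ 0 → 0 ≤ s * P 0 1 * P 1 1 →
      |M.prod| * |P 1 1| ≤ |(eichlerWord M * P) 1 1| := by
  induction M with
  | nil => simp
  | cons l M ih =>
    intro s P hM hd hbd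
    obtain ⟨hl, hM⟩ := alternatesInSign_cons.mp hM
    have hstep : |l| * |P 1 1| ≤ |(S * T ^ l * P) 1 1| := by
      rw [S_mul_T_zpow_mul_apply_one_one]
      exact abs_mul_le_abs_add_of_sign hl hbd
    have hd' : (S * T ^ l * P) 1 1 ≠ 0 := by
      rw [← abs_pos] at hd ⊢
      nlinarith [abs_pos.mpr (show l ≠ 0 by rintro rfl; simp at hl)]
    have hbd' : 0 ≤ -s * (S * T ^ l * P) 0 1 * (S * T ^ l * P) 1 1 := by
      rw [S_mul_T_zpow_mul_apply_zero_one, S_mul_T_zpow_mul_apply_one_one]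
      nlinarith [mul_nonneg hl.le (mul_self_nonneg (P 1 1))]
    calc |(l :: M).prod| * |P 1 1| = |M.prod| * (|l| * |P 1 1|) := by
          rw [List.prod_cons, abs_mul]; ring
      _ ≤ |M.prod| * |(S * T ^ l * P) 1 1| := by gcongr
      _ ≤ |(eichlerWord M * (S * T ^ l * P)) 1 1| := ih (-s) _ hM hd' hbd'
      _ = |(eichlerWord (l :: M) * P) 1 1| := by rw [eichlerWord_cons, mul_assoc (eichlerWord M)]

theorem abs_prod_le_abs_eichlerWord_apply_one_one {s : ℤ} {M : List ℤ}
    (hM : AlternatesInSign s M) : |M.prod| ≤ |eichlerWord M 1 1| := by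
  simpa using abs_prod_mul_le_abs_eichlerWord_mul_apply_one_one M s 1 hM (by simp) (by simp)

lemma alternatesInSign_neg_one_of_canonical {L : List ℤ}
    (hsign : ∀ j : ℕ, 1 ≤ j → j ≤ L.length - 2 → 0 < (-1 : ℤ) ^ (j - 1) * L.getD j 0)
    (hlast : 0 ≤ (-1 : ℤ) ^ (L.length - 2) * L.getD (L.length - 1) 0)
    (hlast' : L.getD (L.length - 1) 0 ≠ 0) (h0 : L.getD 0 0 < 0) :
    AlternatesInSign (-1) L := by
  rintro (_ | i) hi
  · simpa using h0
  · have hpow : (-1 : ℤ) * (-1) ^ (i + 1) = (-1) ^ i := by ring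
    rw [hpow]
    rcases Nat.lt_or_ge i (L.length - 2) with h | h
    · simpa using hsign (i + 1) (by omega) (by omega)
    · have hlen : L.length - 1 = i + 1 := by omega
      rw [show L.length - 2 = i by omega, hlen] at hlast
      rw [hlen] at hlast'
      exact hlast.lt_of_ne' (mul_ne_zero (pow_ne_zero _ (by norm_num)) hlast')

theorem eichler_product_estimate_neg_general (γ : Matrix.SpecialLinearGroup (Fin 2) ℤ)
    (L : List ℤ) (hγ : γ = eichlerWord L)
    (hsign : ∀ j : ℕ, 1 ≤ j → j ≤ L.length - 2 → 0 < (-1 : ℤ) ^ (j - 1) * L.getD j 0)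
    (hlast : 0 ≤ (-1 : ℤ) ^ (L.length - 2) * L.getD (L.length - 1) 0)
    (hlast' : L.getD (L.length - 1) 0 ≠ 0)
    (h0 : L.getD 0 0 < 0) :
    |L.prod| ≤ |γ.1 1 1| := by
  subst hγ
  exact abs_prod_le_abs_eichlerWord_apply_one_one
    (alternatesInSign_neg_one_of_canonical hsign hlast hlast' h0)

/-- If `γ = [[a,b],[c,d]] ∈ SL(2,ℤ)` with `c > 0` has Eichler canonical
representation with `l_{ν+1} ≠ 0` and `l_0 < 0`, then
`|l_0 l_1 ⋯ l_{ν+1}| ≤ |d|`. -/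
theorem eichler_product_estimate_neg (γ : Matrix.SpecialLinearGroup (Fin 2) ℤ)
    (hc : 0 < γ.1 1 0) (L : List ℤ)
    (hlen : 2 ≤ L.length) (hγ : γ = eichlerWord L)
    (hsign : ∀ j : ℕ, 1 ≤ j → j ≤ L.length - 2 → 0 < (-1 : ℤ) ^ (j - 1) * L.getD j 0)
    (hlast : 0 ≤ (-1 : ℤ) ^ (L.length - 2) * L.getD (L.length - 1) 0)
    (hlast' : L.getD (L.length - 1) 0 ≠ 0)
    (h0 : L.getD 0 0 < 0) :
    |L.prod| ≤ |γ.1 1 1| :=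
  eichler_product_estimate_neg_general γ L hγ hsign hlast hlast' h0
end

section
/- Let γ = [[a,b],[c,d]] ∈ SL(2,ℤ) with c > 0 have Eichler canonical representation γ = (S T^{l_{ν+1}})⋯(S T^{l_0}) with l_{ν+1} ≠ 0 and l_0 > 0. Then |l_0 l_1 ⋯ l_{ν+1}| ≤ |c| + |d|. -/
/-!
Let `γ_k = (S T^{l_k}) ⋯ (S T^{l_0})`. Left multiplication by `S T^l` sends the rows
`(r₀, r₁)` of a matrix to `(-r₁, r₀ + l r₁)`. If each row has entries of one sign and `l` has
the sign that makes `l r₁` agree with `r₀`, nothing cancels in `r₀ + l r₁`: the ℓ¹-norm of the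
bottom row grows by a factor at least `|l|`, and the rows again have constant signs. The
alternating sign conditions on the `l_j` are exactly what keeps this going, starting from
`γ_1 = [[-1, -l₀], [l₁, l₀ l₁ - 1]]`, whose rows have constant signs as soon as `l₀, l₁ ≥ 1`.
If `l₁ = 0` the product vanishes anyway.
-/

open ModularGroup

section HasSign

variable {ι : Type*}

def HasSign (s : ℤˣ) (v : ι → ℤ) : Prop := ∀ i, 0 ≤ (s : ℤ) * v i

variable {s t : ℤˣ} {u v : ι → ℤ}

theorem HasSign.add (hu : HasSign s u) (hv : HasSign s v) : HasSign s (u + v) :=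
  fun i => by simpa only [Pi.add_apply, mul_add] using add_nonneg (hu i) (hv i)

theorem HasSign.neg (hv : HasSign s v) : HasSign (-s) (-v) :=
  fun i => by simpa only [Units.val_neg, Pi.neg_apply, neg_mul_neg] using hv i

theorem HasSign.smul {l : ℤ} (hv : HasSign t v) (hl : 0 ≤ ((s * t : ℤˣ) : ℤ) * l) :
    HasSign s (l • v) := fun i => by
  have h : (s : ℤ) * (l * v i) = ((s * t : ℤˣ) : ℤ) * l * (t * v i) := by
    push_cast
    linear_combination (-(s : ℤ) * l * v i) * Int.units_coe_mul_self t
  simpa only [Pi.smul_apply, smul_eq_mul, h] using mul_nonneg hl (hv i)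

theorem HasSign.sum_abs_add [Fintype ι] (hu : HasSign s u) (hv : HasSign s v) :
    ∑ i, |(u + v) i| = ∑ i, |u i| + ∑ i, |v i| := by
  rw [← Finset.sum_add_distrib]
  refine Finset.sum_congr rfl fun i _ => (abs_add_eq_add_abs_iff _ _).2 ?_
  have hui := hu i
  have hvi := hv i
  rcases Int.units_eq_one_or s with rfl | rfl
  · left; simp_all
  · right; simp_all

end HasSign

section Rows

variable (l : ℤ) (A : Matrix.SpecialLinearGroup (Fin 2) ℤ)

theorem S_mul_T_zpow_mul_row_zero : (S * T ^ l * A).1 0 = -A.1 1 := by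
  ext j
  simp [Matrix.SpecialLinearGroup.coe_mul, coe_S, coe_T_zpow, Matrix.mul_apply, Fin.sum_univ_two]

theorem S_mul_T_zpow_mul_row_one : (S * T ^ l * A).1 1 = A.1 0 + l • A.1 1 := by
  ext j
  simp [Matrix.SpecialLinearGroup.coe_mul, coe_S, coe_T_zpow, Matrix.mul_apply, Fin.sum_univ_two]

variable {l A} {s t : ℤˣ}

theorem abs_mul_sum_abs_le_S_mul_T_zpow_mul (h₀ : HasSign s (A.1 0)) (h₁ : HasSign t (A.1 1))
    (hl : 0 ≤ ((s * t : ℤˣ) : ℤ) * l) :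
    |l| * ∑ i, |A.1 1 i| ≤ ∑ i, |(S * T ^ l * A).1 1 i| := by
  rw [S_mul_T_zpow_mul_row_one, h₀.sum_abs_add (h₁.smul hl)]
  simp only [Pi.smul_apply, smul_eq_mul, abs_mul, ← Finset.mul_sum]
  linarith [Finset.sum_nonneg fun i (_ : i ∈ Finset.univ) => abs_nonneg (A.1 0 i)]

end Rows

theorem eichlerWord_append_singleton (K : List ℤ) (l : ℤ) :
    eichlerWord (K ++ [l]) = S * T ^ l * eichlerWord K := by
  simp [eichlerWord]

theorem coe_eichlerWord_pair (a l : ℤ) :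
    (eichlerWord [a, l] : Matrix (Fin 2) (Fin 2) ℤ) = !![-1, -a; l, l * a - 1] := by
  simp [eichlerWord, Matrix.SpecialLinearGroup.coe_mul, coe_S, coe_T_zpow, sub_eq_neg_add]

/-- `s * t` is the sign the next exponent `l_{|K|}` needs for the row signs to propagate. -/
def EichlerInvariant (K : List ℤ) : Prop :=
  ∃ s t : ℤˣ, s * t = (-1) ^ (K.length + 1) ∧ HasSign s ((eichlerWord K).1 0) ∧
    HasSign t ((eichlerWord K).1 1) ∧ |K.prod| ≤ ∑ i, |(eichlerWord K).1 1 i|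

theorem eichlerInvariant_pair {a l : ℤ} (ha : 0 < a) (hl : 0 < l) : EichlerInvariant [a, l] := by
  have hla : 1 ≤ l * a := one_le_mul_of_one_le_of_one_le hl ha
  refine ⟨-1, 1, by simp [pow_succ], ?_, ?_, ?_⟩
  · intro i; fin_cases i <;> simp [coe_eichlerWord_pair, ha.le]
  · intro i; fin_cases i <;> simp [coe_eichlerWord_pair, hl.le, hla]
  · simp [coe_eichlerWord_pair, Fin.sum_univ_two, abs_of_pos ha, abs_of_pos hl,
      abs_of_nonneg (sub_nonneg.2 hla)]
    linarith

theorem EichlerInvariant.append_singleton {K : List ℤ} {l : ℤ} (hK : EichlerInvariant K)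
    (hl : 0 ≤ (-1 : ℤ) ^ (K.length + 1) * l) : EichlerInvariant (K ++ [l]) := by
  obtain ⟨s, t, hst, h₀, h₁, hprod⟩ := hK
  have hl' : 0 ≤ ((s * t : ℤˣ) : ℤ) * l := by rw [hst]; push_cast; exact hl
  refine ⟨-t, s, ?_, ?_, ?_, ?_⟩
  · rw [List.length_append, List.length_singleton, pow_succ, ← hst]
    simp [mul_comm]
  · rw [eichlerWord_append_singleton, S_mul_T_zpow_mul_row_zero]
    exact h₁.neg
  · rw [eichlerWord_append_singleton, S_mul_T_zpow_mul_row_one]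
    exact h₀.add (h₁.smul hl')
  · rw [eichlerWord_append_singleton, List.prod_append, List.prod_singleton, abs_mul, mul_comm]
    calc |l| * |K.prod| ≤ |l| * ∑ i, |(eichlerWord K).1 1 i| :=
          mul_le_mul_of_nonneg_left hprod (abs_nonneg l)
      _ ≤ _ := abs_mul_sum_abs_le_S_mul_T_zpow_mul h₀ h₁ hl'

theorem eichlerInvariant_of_signs (K : List ℤ) (hlen : 2 ≤ K.length) (h₀ : 0 < K.getD 0 0)
    (h₁ : 0 < K.getD 1 0)
    (hsign : ∀ j, 2 ≤ j → j < K.length → 0 ≤ (-1 : ℤ) ^ (j - 1) * K.getD j 0) :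
    EichlerInvariant K := by
  induction K using List.reverseRecOn with
  | nil => simp at hlen
  | append_singleton K l ih =>
    rcases Nat.lt_or_ge K.length 2 with hK | hK
    · obtain ⟨a, rfl⟩ : ∃ a, K = [a] := by
        rw [List.length_append, List.length_singleton] at hlen
        exact List.length_eq_one_iff.1 (by omega)
      exact eichlerInvariant_pair (by simpa using h₀) (by simpa using h₁)
    · have hgetD : ∀ j < K.length, (K ++ [l]).getD j 0 = K.getD j 0 :=
        fun j hj => List.getD_append _ _ _ _ hj
      refine (ih hK (by rwa [← hgetD 0 (by omega)]) (by rwa [← hgetD 1 (by omega)])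
        fun j hj₂ hj => ?_).append_singleton ?_
      · rw [← hgetD j hj]
        exact hsign j hj₂ (by simp; omega)
      · have hl := hsign K.length hK (by simp)
        have hpow : (-1 : ℤ) ^ (K.length + 1) = (-1) ^ (K.length - 1) := by
          rw [show K.length + 1 = K.length - 1 + 2 by omega, pow_add]
          norm_num
        rwa [List.getD_append_right _ _ _ _ le_rfl, Nat.sub_self, List.getD_cons_zero,
          ← hpow] at hl

theorem eichler_product_estimate_pos_general (γ : Matrix.SpecialLinearGroup (Fin 2) ℤ)
    (L : List ℤ)
    (hlen : 2 ≤ L.length) (hγ : γ = eichlerWord L)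
    (hsign : ∀ j : ℕ, 1 ≤ j → j ≤ L.length - 2 → 0 < (-1 : ℤ) ^ (j - 1) * L.getD j 0)
    (hlast : 0 ≤ (-1 : ℤ) ^ (L.length - 2) * L.getD (L.length - 1) 0)
    (h0 : 0 < L.getD 0 0) :
    |L.prod| ≤ |γ.1 1 0| + |γ.1 1 1| := by
  have hsign' : ∀ j, 1 ≤ j → j < L.length → 0 ≤ (-1 : ℤ) ^ (j - 1) * L.getD j 0 := by
    intro j hj₁ hj
    rcases Nat.lt_or_ge j (L.length - 1) with hj' | hj'
    · exact (hsign j hj₁ (by omega)).le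
    · rwa [show j = L.length - 1 by omega, show L.length - 1 - 1 = L.length - 2 by omega]
  by_cases hl₁ : L.getD 1 0 = 0
  · have hmem : (0 : ℤ) ∈ L := by
      rw [← hl₁, List.getD_eq_getElem L 0 (by omega)]
      exact List.getElem_mem _
    rw [List.prod_eq_zero hmem, abs_zero]
    positivity
  · obtain ⟨-, -, -, -, -, hbound⟩ := eichlerInvariant_of_signs L hlen h0
      (lt_of_le_of_ne (by simpa using hsign' 1 le_rfl (by omega)) (Ne.symm hl₁))
      fun j hj₂ hj => hsign' j (by omega) hj
    simpa [hγ, Fin.sum_univ_two] using hbound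

/-- If `γ = [[a,b],[c,d]] ∈ SL(2,ℤ)` with `c > 0` has Eichler canonical
representation with `l_{ν+1} ≠ 0` and `l_0 > 0`, then
`|l_0 l_1 ⋯ l_{ν+1}| ≤ |c| + |d|`. -/
theorem eichler_product_estimate_pos (γ : Matrix.SpecialLinearGroup (Fin 2) ℤ)
    (hc : 0 < γ.1 1 0) (L : List ℤ)
    (hlen : 2 ≤ L.length) (hγ : γ = eichlerWord L)
    (hsign : ∀ j : ℕ, 1 ≤ j → j ≤ L.length - 2 → 0 < (-1 : ℤ) ^ (j - 1) * L.getD j 0)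
    (hlast : 0 ≤ (-1 : ℤ) ^ (L.length - 2) * L.getD (L.length - 1) 0)
    (hlast' : L.getD (L.length - 1) 0 ≠ 0)
    (h0 : 0 < L.getD 0 0) :
    |L.prod| ≤ |γ.1 1 0| + |γ.1 1 1| :=
  eichler_product_estimate_pos_general γ L hlen hγ hsign hlast h0
end

section
/- Define P_0 = S T^{l_0} with l_0 > 0, l_1 > 0, and P_{j+1} = (S T^{l_{j+1}}) P_j where (-1)^{j-1} l_j > 0 for j ≥ 1. Writing P_j = [[a_j,b_j],[c_j,d_j]], for all j ≥ 0 one has |l_0 l_1 ⋯ l_j| ≤ |c_j| + |d_j|, and for j ≥ 1 both (-1)^j b_j d_j ≥ 0 and (-1)^j a_j c_j ≥ 0. -/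
/-!
Each step `M ↦ S T^l M` sends the rows `(r₀, r₁)` of `M` to `(-r₁, r₀ + l r₁)`. The sign
conditions on the `l_j` make `r₀` and `l r₁` sign-coherent at every stage, so no cancellation
occurs in `r₀ + l r₁`: the bottom row keeps the sign of `l_0 ⋯ l_j`, the top row that sign times
`(-1)^j`, and each step multiplies the size of the bottom row by at least `|l_{j+1}|`.
-/

open ModularGroup Finset
open scoped MatrixGroups

lemma mul_nonneg_of_mul_nonneg_of_mul_nonneg {R : Type*} [CommRing R] [LinearOrder R]
    [IsStrictOrderedRing R] {m x y : R} (hm : m ≠ 0) (hx : 0 ≤ m * x) (hy : 0 ≤ m * y) :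
    0 ≤ x * y :=
  nonneg_of_mul_nonneg_right (by simpa only [mul_mul_mul_comm] using mul_nonneg hx hy)
    (mul_self_pos.mpr hm)

lemma abs_add_of_mul_nonneg {R : Type*} [CommRing R] [LinearOrder R] [IsStrictOrderedRing R]
    {x y : R} (h : 0 ≤ x * y) : |x + y| = |x| + |y| :=
  (abs_add_eq_add_abs_iff x y).mpr (mul_nonneg_iff.mp h)

namespace ModularGroup

lemma S_mul_T_zpow_mul_apply_zero (l : ℤ) (M : SL(2, ℤ)) (k : Fin 2) :
    (S * T ^ l * M) 0 k = -M 1 k := by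
  simp [Matrix.SpecialLinearGroup.coe_mul, coe_T_zpow, Matrix.mul_apply, Fin.sum_univ_two]

lemma S_mul_T_zpow_mul_apply_one (l : ℤ) (M : SL(2, ℤ)) (k : Fin 2) :
    (S * T ^ l * M) 1 k = M 0 k + l * M 1 k := by
  fin_cases k <;>
    simp [Matrix.SpecialLinearGroup.coe_mul, coe_T_zpow, Matrix.mul_apply, Fin.sum_univ_two]

def RowSigns (σ π : ℤ) (M : SL(2, ℤ)) : Prop :=
  ∀ k, 0 ≤ σ * π * M 0 k ∧ 0 ≤ π * M 1 k

namespace RowSigns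

variable {σ π l : ℤ} {M : SL(2, ℤ)}

lemma S_mul_T_zpow_mul (hσ : σ * σ = 1) (hl : 0 < σ * l) (h : RowSigns σ π M) :
    RowSigns (-σ) (π * l) (S * T ^ l * M) := by
  intro k
  obtain ⟨htop, hbot⟩ := h k
  rw [S_mul_T_zpow_mul_apply_zero, S_mul_T_zpow_mul_apply_one]
  constructor
  · calc (0 : ℤ) ≤ σ * l * (π * M 1 k) := mul_nonneg hl.le hbot
      _ = -σ * (π * l) * -M 1 k := by ring
  · calc (0 : ℤ) ≤ σ * l * (σ * π * M 0 k) + l ^ 2 * (π * M 1 k) := by positivity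
      _ = π * l * (M 0 k + l * M 1 k) := by linear_combination (π * l * M 0 k) * hσ

lemma abs_mul_abs_le_abs_S_mul_T_zpow_mul_apply (hσ : σ * σ = 1) (hl : 0 < σ * l)
    (hπ : π ≠ 0) (h : RowSigns σ π M) (k : Fin 2) :
    |l| * |M 1 k| ≤ |(S * T ^ l * M) 1 k| := by
  obtain ⟨htop, hbot⟩ := h k
  have hσπ : σ * π ≠ 0 := mul_ne_zero (left_ne_zero_of_mul_eq_one hσ) hπ
  have hcoherent : 0 ≤ M 0 k * (l * M 1 k) :=
    mul_nonneg_of_mul_nonneg_of_mul_nonneg hσπ htop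
      (by linear_combination mul_nonneg hl.le hbot)
  rw [S_mul_T_zpow_mul_apply_one, abs_add_of_mul_nonneg hcoherent, abs_mul]
  exact le_add_of_nonneg_left (abs_nonneg _)

end RowSigns

end ModularGroup

section PartialProducts

variable {l : ℕ → ℤ} {P : ℕ → SL(2, ℤ)}

lemma prod_range_ne_zero_of_signs (h0 : 0 < l 0)
    (hsign : ∀ j : ℕ, 1 ≤ j → 0 < (-1 : ℤ) ^ (j - 1) * l j) (n : ℕ) :
    ∏ t ∈ range n, l t ≠ 0 := by
  refine prod_ne_zero_iff.mpr fun t _ => ?_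
  rcases t with _ | t
  · exact h0.ne'
  · exact right_ne_zero_of_mul (hsign (t + 1) (by omega)).ne'

lemma rowSigns_and_abs_prod_le (h0 : 0 < l 0)
    (hsign : ∀ j : ℕ, 1 ≤ j → 0 < (-1 : ℤ) ^ (j - 1) * l j)
    (hP0 : P 0 = S * T ^ l 0) (hPstep : ∀ j : ℕ, P (j + 1) = S * T ^ l (j + 1) * P j)
    {j : ℕ} (hj : 1 ≤ j) :
    RowSigns ((-1) ^ j) (∏ t ∈ range (j + 1), l t) (P j) ∧
      |∏ t ∈ range (j + 1), l t| ≤ |P j 1 0| + |P j 1 1| := by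
  induction j, hj using Nat.le_induction with
  | base =>
    have h1 : 0 < l 1 := by simpa using hsign 1 le_rfl
    have hπ : 1 ≤ l 0 * l 1 := one_le_mul_of_one_le_of_one_le h0 h1
    obtain ⟨h00, h01, h10, h11⟩ :
        P 1 0 0 = -1 ∧ P 1 0 1 = -l 0 ∧ P 1 1 0 = l 1 ∧ P 1 1 1 = l 0 * l 1 - 1 := by
      simp only [hPstep, hP0, S_mul_T_zpow_mul_apply_zero, S_mul_T_zpow_mul_apply_one]
      simp [coe_T_zpow]
      ring
    simp only [prod_range_succ, range_one, prod_singleton]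
    refine ⟨Fin.forall_fin_two.mpr ⟨⟨?_, ?_⟩, ?_, ?_⟩, ?_⟩ <;>
      simp only [pow_one, h00, h01, h10, h11]
    · linarith
    · nlinarith
    · nlinarith
    · nlinarith
    · rw [abs_of_pos h1, abs_of_nonneg (sub_nonneg.mpr hπ), abs_of_pos (by positivity)]
      linarith
  | succ j hj ih =>
    obtain ⟨hrow, hle⟩ := ih
    have hσ : (-1 : ℤ) ^ j * (-1) ^ j = 1 := by rw [← mul_pow]; norm_num
    have hl : 0 < (-1 : ℤ) ^ j * l (j + 1) := by simpa using hsign (j + 1) (by omega)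
    have hbound := hrow.abs_mul_abs_le_abs_S_mul_T_zpow_mul_apply hσ hl
      (prod_range_ne_zero_of_signs h0 hsign _)
    rw [hPstep, prod_range_succ, pow_succ, mul_neg_one]
    refine ⟨hrow.S_mul_T_zpow_mul hσ hl, ?_⟩
    calc |(∏ t ∈ range (j + 1), l t) * l (j + 1)|
        = |l (j + 1)| * |∏ t ∈ range (j + 1), l t| := by rw [abs_mul, mul_comm]
      _ ≤ |l (j + 1)| * (|P j 1 0| + |P j 1 1|) := by gcongr
      _ ≤ _ := by rw [mul_add]; exact add_le_add (hbound 0) (hbound 1)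

end PartialProducts

theorem eichler_partial_product_induction_pos_general (l : ℕ → ℤ)
    (h0 : 0 < l 0)
    (hsign : ∀ j : ℕ, 1 ≤ j → 0 < (-1 : ℤ) ^ (j - 1) * l j)
    (P : ℕ → Matrix.SpecialLinearGroup (Fin 2) ℤ)
    (hP0 : P 0 = ModularGroup.S * ModularGroup.T ^ (l 0))
    (hPstep : ∀ j : ℕ, P (j + 1) = (ModularGroup.S * ModularGroup.T ^ (l (j + 1))) * P j) :
    (∀ j : ℕ, |∏ t ∈ Finset.range (j + 1), l t| ≤ |(P j).1 1 0| + |(P j).1 1 1|) ∧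
    (∀ j : ℕ, 1 ≤ j →
      0 ≤ (-1 : ℤ) ^ j * ((P j).1 0 1) * ((P j).1 1 1) ∧
      0 ≤ (-1 : ℤ) ^ j * ((P j).1 0 0) * ((P j).1 1 0)) := by
  have hπ := prod_range_ne_zero_of_signs h0 hsign
  refine ⟨fun j => ?_, fun j hj => ?_⟩
  · rcases j.eq_zero_or_pos with rfl | hj
    · simp [hP0, Matrix.SpecialLinearGroup.coe_mul, coe_T_zpow, Matrix.mul_apply, Fin.sum_univ_two]
    · exact (rowSigns_and_abs_prod_le h0 hsign hP0 hPstep hj).2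
  · have hrow := (rowSigns_and_abs_prod_le h0 hsign hP0 hPstep hj).1
    obtain ⟨htop₀, hbot₀⟩ := hrow 0
    obtain ⟨htop₁, hbot₁⟩ := hrow 1
    exact ⟨mul_nonneg_of_mul_nonneg_of_mul_nonneg (hπ _) (by linear_combination htop₁) hbot₁,
      mul_nonneg_of_mul_nonneg_of_mul_nonneg (hπ _) (by linear_combination htop₀) hbot₀⟩

/-- Key induction: with `P_0 = S T^{l_0}`, `l_0 > 0`, `l_1 > 0`, and
`P_{j+1} = (S T^{l_{j+1}}) P_j` where `(-1)^{j-1} l_j > 0` for `j ≥ 1`, writing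
`P_j = [[a_j,b_j],[c_j,d_j]]` one has `|l_0 l_1 ⋯ l_j| ≤ |c_j| + |d_j|` for all
`j ≥ 0`, and `(-1)^j b_j d_j ≥ 0` and `(-1)^j a_j c_j ≥ 0` for `j ≥ 1`. -/
theorem eichler_partial_product_induction_pos (l : ℕ → ℤ)
    (h0 : 0 < l 0) (h1 : 0 < l 1)
    (hsign : ∀ j : ℕ, 1 ≤ j → 0 < (-1 : ℤ) ^ (j - 1) * l j)
    (P : ℕ → Matrix.SpecialLinearGroup (Fin 2) ℤ)
    (hP0 : P 0 = ModularGroup.S * ModularGroup.T ^ (l 0))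
    (hPstep : ∀ j : ℕ, P (j + 1) = (ModularGroup.S * ModularGroup.T ^ (l (j + 1))) * P j) :
    (∀ j : ℕ, |∏ t ∈ Finset.range (j + 1), l t| ≤ |(P j).1 1 0| + |(P j).1 1 1|) ∧
    (∀ j : ℕ, 1 ≤ j →
      0 ≤ (-1 : ℤ) ^ j * ((P j).1 0 1) * ((P j).1 1 1) ∧
      0 ≤ (-1 : ℤ) ^ j * ((P j).1 0 0) * ((P j).1 1 0)) :=
  eichler_partial_product_induction_pos_general l h0 hsign P hP0 hPstep
end

section
/- Let ρ : SL(2,ℤ) → GL(p,ℂ) be a representation and F = (f_1,…,f_p) a holomorphic function on the upper half-plane of weight k with respect to ρ, i.e. ρ(γ)F(τ) = (cτ+d)^{-k} F(γτ) for all γ = [[a,b],[c,d]] ∈ SL(2,ℤ). Suppose there exist constants K₁, σ > 0 with y^σ |f_l(z)| ≤ K₁ for all z in the closure of the fundamental domain and all l, and ‖ρ(γ)‖ ≤ K₃ (c² + d²)^{K₄} for all γ. Then with σ = (k + K₅)/2 for suitable K₅ depending only on k, K₄, each y^σ |f_l(τ)| is bounded on all of the upper half-plane by a constant depending only on p, K₁,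 K₃, K₄, k. -/
/-!
Write `τ = γ • w` with `w` in the fundamental domain and `γ = [[a, b], [c, d]]`. Since
`Im τ = Im w / |cw + d|²`, the transformation law gives
`(Im τ)^σ |f_l(τ)| = (Im w)^σ |cw + d|^(k - 2σ) |(ρ(γ) F(w))_l|`.
Taking `σ = (k + 2M)/2` with `M = max K₄ 0` turns the automorphy factor into `|cw + d|^(-2M)`,
and for `w` in the fundamental domain `c² + d² ≤ 2 |cw + d|²`, so this factor absorbs the growth
`(c² + d²)^K₄ ≤ 2^M |cw + d|^(2M)` of the entries of `ρ(γ)`.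
-/

open Matrix UpperHalfPlane ModularGroup Complex Finset
open scoped MatrixGroups Modular

theorem Matrix.norm_mulVec_apply_le {m n R : Type*} [Fintype n] [SeminormedRing R]
    {A : Matrix m n R} {l : m} {C : ℝ} (hA : ∀ j, ‖A l j‖ ≤ C) (v : n → R) :
    ‖(A *ᵥ v) l‖ ≤ C * ∑ j, ‖v j‖ :=
  calc ‖∑ j, A l j * v j‖ ≤ ∑ j, ‖A l j‖ * ‖v j‖ :=
        (norm_sum_le _ _).trans (sum_le_sum fun j _ ↦ norm_mul_le _ _)
    _ ≤ ∑ j, C * ‖v j‖ := by gcongr with j; exact hA j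
    _ = C * ∑ j, ‖v j‖ := (mul_sum _ _ _).symm

lemma ModularGroup.one_le_sq_add_sq_bottom_row (γ : SL(2, ℤ)) :
    1 ≤ (γ 1 0 : ℝ) ^ 2 + (γ 1 1 : ℝ) ^ 2 := by
  have hne : γ 1 0 ≠ 0 ∨ γ 1 1 ≠ 0 := by
    by_contra! h
    simpa [h.1, h.2, isCoprime_zero_left] using bottom_row_coprime γ
  have : (1 : ℤ) ≤ γ 1 0 ^ 2 + γ 1 1 ^ 2 := by
    rcases hne with h | h
    · nlinarith [(one_le_sq_iff_one_le_abs _).mpr (Int.one_le_abs h), sq_nonneg (γ 1 1)]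
    · nlinarith [(one_le_sq_iff_one_le_abs _).mpr (Int.one_le_abs h), sq_nonneg (γ 1 0)]
  exact_mod_cast this

lemma sq_add_sq_le_two_mul_normSq {z : ℂ} (hz : 1 ≤ normSq z) (hre : |z.re| ≤ 1 / 2) (c d : ℝ) :
    c ^ 2 + d ^ 2 ≤ 2 * normSq (c * z + d) := by
  have hnormSq : normSq (c * z + d) = c ^ 2 * normSq z + 2 * c * d * z.re + d ^ 2 := by
    simp only [normSq_apply, add_re, add_im, mul_re, mul_im, ofReal_re, ofReal_im]
    ring
  have hcross : |2 * c * d * z.re| ≤ |c| * |d| := by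
    rw [abs_mul, abs_mul, abs_mul, abs_two]
    nlinarith [mul_nonneg (abs_nonneg c) (abs_nonneg d)]
  nlinarith [neg_abs_le (2 * c * d * z.re), sq_nonneg (|c| - |d|), sq_abs c, sq_abs d,
    mul_le_mul_of_nonneg_left hz (sq_nonneg c)]

lemma ModularGroup.sq_add_sq_bottom_row_rpow_le {w : ℍ} (hw : w ∈ 𝒟) (γ : SL(2, ℤ)) {K M : ℝ}
    (hKM : K ≤ M) (hM : 0 ≤ M) :
    ((γ 1 0 : ℝ) ^ 2 + (γ 1 1 : ℝ) ^ 2) ^ K ≤ 2 ^ M * (‖denom γ w‖ ^ 2) ^ M := by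
  have hfd : (γ 1 0 : ℝ) ^ 2 + (γ 1 1 : ℝ) ^ 2 ≤ 2 * ‖denom γ w‖ ^ 2 := by
    simpa [denom_apply, normSq_eq_norm_sq] using
      sq_add_sq_le_two_mul_normSq hw.1 hw.2 (γ 1 0) (γ 1 1)
  calc ((γ 1 0 : ℝ) ^ 2 + (γ 1 1 : ℝ) ^ 2) ^ K
      ≤ ((γ 1 0 : ℝ) ^ 2 + (γ 1 1 : ℝ) ^ 2) ^ M :=
        Real.rpow_le_rpow_of_exponent_le (one_le_sq_add_sq_bottom_row γ) hKM
    _ ≤ (2 * ‖denom γ w‖ ^ 2) ^ M := by gcongr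
    _ = 2 ^ M * (‖denom γ w‖ ^ 2) ^ M := Real.mul_rpow zero_le_two (sq_nonneg _)

lemma apply_smul_eq_denom_zpow_mul {n : Type*} [Fintype n] {k : ℤ} {F : ℂ → n → ℂ}
    {A : Matrix n n ℂ} {γ : SL(2, ℤ)} {w : ℍ}
    (hF : A *ᵥ F w = fun l ↦ ((γ 1 0 : ℂ) * w + (γ 1 1 : ℂ)) ^ (-k) *
      F (((γ 0 0 : ℂ) * w + (γ 0 1 : ℂ)) / ((γ 1 0 : ℂ) * w + (γ 1 1 : ℂ))) l) (l : n) :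
    F ↑(γ • w) l = denom γ w ^ k * (A *ᵥ F w) l := by
  have hj : denom γ w ≠ 0 := denom_ne_zero _ w
  rw [hF, ← denom_apply, ← mul_assoc, ← zpow_add₀ hj, add_neg_cancel, zpow_zero, one_mul,
    coe_specialLinearGroup_apply]
  simp [denom_apply]

lemma rpow_div_sq_mul_zpow {y D : ℝ} (hy : 0 ≤ y) (hD : 0 < D) (k : ℤ) (M : ℝ) :
    (y / D ^ 2) ^ ((k + 2 * M) / 2) * D ^ k = y ^ ((k + 2 * M) / 2) / (D ^ 2) ^ M := by
  have hpow : (D ^ 2) ^ ((k + 2 * M) / 2) = D ^ k * (D ^ 2) ^ M := by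
    rw [← Real.rpow_natCast, ← Real.rpow_mul hD.le, ← Real.rpow_mul hD.le, ← Real.rpow_intCast,
      ← Real.rpow_add hD]
    ring_nf
  rw [Real.div_rpow hy (by positivity), hpow]
  field_simp

theorem im_smul_rpow_mul_norm_le {p : ℕ} {k : ℤ} {K₁ K₃ K₄ M : ℝ} (hK₃ : 0 ≤ K₃)
    (hK₄M : K₄ ≤ M) (hM : 0 ≤ M) {ρ : SL(2, ℤ) →* GL (Fin p) ℂ} {F : ℂ → Fin p → ℂ}
    (hρ : ∀ γ : SL(2, ℤ), ∀ l m : Fin p,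
      ‖(ρ γ : Matrix (Fin p) (Fin p) ℂ) l m‖ ≤ K₃ * ((γ 1 0 : ℝ) ^ 2 + (γ 1 1 : ℝ) ^ 2) ^ K₄)
    {w : ℍ} (hw : w ∈ 𝒟) (hFw : ∀ m, w.im ^ (((k : ℝ) + 2 * M) / 2) * ‖F w m‖ ≤ K₁)
    {γ : SL(2, ℤ)} (hF : (ρ γ : Matrix (Fin p) (Fin p) ℂ) *ᵥ F w =
      fun l ↦ ((γ 1 0 : ℂ) * w + (γ 1 1 : ℂ)) ^ (-k) *
        F (((γ 0 0 : ℂ) * w + (γ 0 1 : ℂ)) / ((γ 1 0 : ℂ) * w + (γ 1 1 : ℂ))) l) (l : Fin p) :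
    (γ • w).im ^ (((k : ℝ) + 2 * M) / 2) * ‖F ↑(γ • w) l‖ ≤ 2 ^ M * K₃ * (p * K₁) := by
  set σ : ℝ := ((k : ℝ) + 2 * M) / 2
  set D := ‖denom γ w‖
  have hD : 0 < D := norm_pos_iff.mpr (denom_ne_zero _ w)
  have him : (γ • w).im = w.im / D ^ 2 := by
    rw [ModularGroup.im_smul_eq_div_normSq, normSq_eq_norm_sq]
  calc (γ • w).im ^ σ * ‖F ↑(γ • w) l‖
      = w.im ^ σ / (D ^ 2) ^ M * ‖((ρ γ : Matrix (Fin p) (Fin p) ℂ) *ᵥ F w) l‖ := by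
        rw [him, apply_smul_eq_denom_zpow_mul hF, norm_mul, norm_zpow, ← mul_assoc,
          rpow_div_sq_mul_zpow w.im_pos.le hD]
    _ ≤ w.im ^ σ / (D ^ 2) ^ M *
          (K₃ * ((γ 1 0 : ℝ) ^ 2 + (γ 1 1 : ℝ) ^ 2) ^ K₄ * ∑ m, ‖F w m‖) := by
        gcongr
        exact norm_mulVec_apply_le (hρ γ l) _
    _ ≤ w.im ^ σ / (D ^ 2) ^ M * (K₃ * (2 ^ M * (D ^ 2) ^ M) * ∑ m, ‖F w m‖) := by
        gcongr
        exact sq_add_sq_bottom_row_rpow_le hw γ hK₄M hM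
    _ = 2 ^ M * K₃ * ∑ m, w.im ^ σ * ‖F w m‖ := by
        rw [← mul_sum]
        field_simp
    _ ≤ 2 ^ M * K₃ * (p * K₁) := by
        gcongr
        simpa using sum_le_card_nsmul univ _ _ fun m _ ↦ hFw m

/-- Hecke bound: if `F` is holomorphic on `ℍ` of weight `k` for a representation
`ρ` of `SL(2,ℤ)`, `y^σ |f_l|` is bounded by `K₁` on the closure of the standard
fundamental domain for `σ = (k+K₅)/2`, and `‖ρ(γ)‖ ≤ K₃ (c²+d²)^{K₄}`, then for
a suitable `K₅` depending only on `k, K₄`, each `y^{(k+K₅)/2} |f_l(τ)|` is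
bounded on all of `ℍ` by a constant depending only on `p, K₁, K₃, K₄, k`. -/
theorem vvmf_growth_bound (p : ℕ) (k : ℤ) (K₁ K₃ K₄ : ℝ)
    (hK₁ : 0 < K₁) (hK₃ : 0 < K₃) :
    ∃ K₅ B : ℝ, 0 < B ∧
      ∀ (ρ : Matrix.SpecialLinearGroup (Fin 2) ℤ →* Matrix.GeneralLinearGroup (Fin p) ℂ)
        (F : ℂ → Fin p → ℂ),
        (∀ l : Fin p, DifferentiableOn ℂ (fun τ => F τ l) {τ : ℂ | 0 < τ.im}) →
        (∀ γ : Matrix.SpecialLinearGroup (Fin 2) ℤ, ∀ τ : ℂ, 0 < τ.im →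
          ((ρ γ : Matrix (Fin p) (Fin p) ℂ)).mulVec (F τ) =
            fun l => ((γ.1 1 0 : ℂ) * τ + (γ.1 1 1 : ℂ)) ^ (-k) *
              F (((γ.1 0 0 : ℂ) * τ + (γ.1 0 1 : ℂ)) /
                 ((γ.1 1 0 : ℂ) * τ + (γ.1 1 1 : ℂ))) l) →
        (∀ z : ℂ, |z.re| ≤ 1 / 2 → 1 ≤ ‖z‖ → 0 < z.im →
          ∀ l : Fin p,
            Real.rpow z.im (((k : ℝ) + K₅) / 2) * ‖F z l‖ ≤ K₁) →
        (∀ γ : Matrix.SpecialLinearGroup (Fin 2) ℤ, ∀ l m : Fin p,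
          ‖(ρ γ : Matrix (Fin p) (Fin p) ℂ) l m‖ ≤
            K₃ * Real.rpow ((γ.1 1 0 : ℝ) ^ 2 + (γ.1 1 1 : ℝ) ^ 2) K₄) →
        ∀ τ : ℂ, 0 < τ.im → ∀ l : Fin p,
          Real.rpow τ.im (((k : ℝ) + K₅) / 2) * ‖F τ l‖ ≤ B := by
  set M := max K₄ 0
  refine ⟨2 * M, 2 ^ M * K₃ * ((p + 1) * K₁), by positivity, ?_⟩
  intro ρ F _ htrans hfd hρ τ hτ l
  obtain ⟨g, hg⟩ := exists_smul_mem_fd (⟨τ, hτ⟩ : ℍ)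
  set w := g • (⟨τ, hτ⟩ : ℍ)
  have hτw : τ = ↑(g⁻¹ • w) := by rw [inv_smul_smul]
  have hFw (m : Fin p) : w.im ^ (((k : ℝ) + 2 * M) / 2) * ‖F w m‖ ≤ K₁ :=
    hfd w hg.2 ((one_le_sq_iff₀ (norm_nonneg _)).mp (normSq_eq_norm_sq (w : ℂ) ▸ hg.1)) w.im_pos m
  calc τ.im ^ (((k : ℝ) + 2 * M) / 2) * ‖F τ l‖
      ≤ 2 ^ M * K₃ * (p * K₁) := hτw ▸ im_smul_rpow_mul_norm_le hK₃.le (le_max_left _ _)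
        (le_max_right _ _) hρ hg hFw (htrans g⁻¹ w w.im_pos) l
    _ ≤ 2 ^ M * K₃ * ((p + 1) * K₁) := by gcongr; linarith
end
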